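/- Addition of constructed numbers is commutative: for all constructor numbers x and y (over a fixed condition algebra C), there exists a CN number term c such that x + y →̲ c and y + x →̲ c. -/

import Mathlib

/-- A condition algebra with bracket: a commutative monoid with inversion,
two copy operations, and a bracket operation. -/
class CondAlg (C : Type*) extends CommMonoid C where
  inv : C → C
  c0 : C → C
  c1 : C → C
  brkt : C → C
  inv_inv : ∀ A : C, inv (inv A) = A
  inv_mul : ∀ A B : C, inv (A * B) = inv A * inv B
  c0_mul : ∀ A B : C, c0 (A * B) = c0 A * c0 B
  c1_mul : ∀ A B : C, c1 (A * B) = c1 A * c1 B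
  copy_cancel : ∀ A : C, c0 A * inv (c1 A) = 1
  copy_eq : ∀ A : C, c0 A * c1 A = A
  brkt_one : brkt (1 : C) = 1
  brkt_mul : ∀ A B : C, brkt A * brkt B = brkt (A * B)

/-- CN number terms over the condition algebra `C`. -/
inductive CN (C : Type*) : Type _
  | zero : C → CN C                 -- A·0
  | suc : C → CN C → CN C           -- (A suc)a
  | ann : C → C → CN C → CN C       -- (A,B ann)a
  | copy0 : CN C → CN C             -- a⁰
  | copy1 : CN C → CN C             -- a¹
  | add : CN C → CN C → CN C        -- a + b
  | sub : CN C → CN C → CN C        -- a − b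

variable {C : Type*} [CondAlg C]

open CondAlg

/-- CNSmooth equality `≃` on CN number terms. -/
inductive CNSmooth : CN C → CN C → Prop
  | refl (a : CN C) : CNSmooth a a
  | symm {a b} : CNSmooth a b → CNSmooth b a
  | trans {a b c} : CNSmooth a b → CNSmooth b c → CNSmooth a c
  -- congruence rules
  | suc_congr (A : C) {a b} : CNSmooth a b → CNSmooth (.suc A a) (.suc A b)
  | ann_congr (A B : C) {a b} : CNSmooth a b → CNSmooth (.ann A B a) (.ann A B b)
  | copy0_congr {a b} : CNSmooth a b → CNSmooth (.copy0 a) (.copy0 b)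
  | copy1_congr {a b} : CNSmooth a b → CNSmooth (.copy1 a) (.copy1 b)
  | add_congr {a a' b b'} : CNSmooth a a' → CNSmooth b b' →
      CNSmooth (.add a b) (.add a' b')
  | sub_congr {a a' b b'} : CNSmooth a a' → CNSmooth b b' →
      CNSmooth (.sub a b) (.sub a' b')
  -- exchange laws
  | exch_suc_suc (A B : C) (a : CN C) :
      CNSmooth (.suc A (.suc B a)) (.suc B (.suc A a))
  | exch_ann_suc (A₀ A₁ B : C) (a : CN C) :
      CNSmooth (.ann A₀ A₁ (.suc B a)) (.suc B (.ann A₀ A₁ a))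
  | exch_ann_ann (A₀ A₁ B₀ B₁ : C) (a : CN C) :
      CNSmooth (.ann A₀ A₁ (.ann B₀ B₁ a)) (.ann B₀ B₁ (.ann A₀ A₁ a))
  | exch_ann_ann' (A₀ A₁ B₀ B₁ : C) (a : CN C) :
      CNSmooth (.ann A₀ A₁ (.ann B₀ B₁ a)) (.ann A₀ B₁ (.ann B₀ A₁ a))
  | exch_suc_ann (A B₀ B₁ : C) (a : CN C) :
      CNSmooth (.suc A (.ann B₀ B₁ a)) (.suc B₀ (.ann A B₁ a))
  -- bracket laws
  | brkt_zero (A : C) : CNSmooth (.zero A) (.zero (brkt A))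
  | brkt_suc (A : C) (a : CN C) : CNSmooth (.suc A a) (.suc (brkt A) a)
  | brkt_ann_left (A B : C) (a : CN C) :
      CNSmooth (.ann A B a) (.ann (brkt A) B a)
  | brkt_ann_right (A B : C) (a : CN C) :
      CNSmooth (.ann A B a) (.ann A (brkt B) a)
  -- copy-distribution laws
  | copy0_zero (A : C) : CNSmooth (.copy0 (.zero A)) (.zero (c0 A))
  | copy1_zero (A : C) : CNSmooth (.copy1 (.zero A)) (.zero (c1 A))
  | copy0_suc (A : C) (a : CN C) :
      CNSmooth (.copy0 (.suc A a)) (.suc (c0 A) (.copy0 a))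
  | copy1_suc (A : C) (a : CN C) :
      CNSmooth (.copy1 (.suc A a)) (.suc (c1 A) (.copy1 a))
  | copy0_ann (A B : C) (a : CN C) :
      CNSmooth (.copy0 (.ann A B a)) (.ann (c0 A) (c0 B) (.copy0 a))
  | copy1_ann (A B : C) (a : CN C) :
      CNSmooth (.copy1 (.ann A B a)) (.ann (c1 A) (c1 B) (.copy1 a))
  -- inversion-simplification
  | inv_simp (A B : C) (a : CN C) (h : A * inv B = 1) :
      CNSmooth (.ann A B a) a

/-- Equality reduction `→̲`: the smallest reflexive, transitive, congruent
relation containing smooth equality and all instances of the addition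
program rules. -/
inductive CNEqRed : CN C → CN C → Prop
  | refl (a : CN C) : CNEqRed a a
  | trans {a b c} : CNEqRed a b → CNEqRed b c → CNEqRed a c
  -- contains smooth equality
  | of_smooth {a b} : CNSmooth a b → CNEqRed a b
  -- congruence rules
  | suc_congr (A : C) {a b} : CNEqRed a b → CNEqRed (.suc A a) (.suc A b)
  | ann_congr (A B : C) {a b} : CNEqRed a b → CNEqRed (.ann A B a) (.ann A B b)
  | copy0_congr {a b} : CNEqRed a b → CNEqRed (.copy0 a) (.copy0 b)
  | copy1_congr {a b} : CNEqRed a b → CNEqRed (.copy1 a) (.copy1 b)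
  | add_congr {a a' b b'} : CNEqRed a a' → CNEqRed b b' →
      CNEqRed (.add a b) (.add a' b')
  | sub_congr {a a' b b'} : CNEqRed a a' → CNEqRed b b' →
      CNEqRed (.sub a b) (.sub a' b')
  -- addition program rules
  | add_suc (X : C) (x y : CN C) :
      CNEqRed (.add (.suc X x) y) (.suc X (.add x y))
  | add_ann (X₀ X₁ : C) (x y : CN C) :
      CNEqRed (.add (.ann X₀ X₁ x) y) (.ann X₀ X₁ (.add x y))
  | add_zero_suc (X Y : C) (y : CN C) :
      CNEqRed (.add (.zero X) (.suc Y y)) (.suc Y (.add (.zero X) y))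
  | add_zero_ann (X Y₀ Y₁ : C) (y : CN C) :
      CNEqRed (.add (.zero X) (.ann Y₀ Y₁ y)) (.ann Y₀ Y₁ (.add (.zero X) y))
  | add_zero_zero (X Y : C) :
      CNEqRed (.add (.zero X) (.zero Y)) (.zero (CondAlg.brkt (X * Y)))

/-- Constructor numbers: CN terms built only from the constructors
`A·0`, `(A suc)a`, `(A,B ann)a`. -/
inductive IsCon : CN C → Prop
  | zero (A : C) : IsCon (.zero A)
  | suc (A : C) {a} : IsCon a → IsCon (.suc A a)
  | ann (A B : C) {a} : IsCon a → IsCon (.ann A B a)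

/-!
By the addition program, `x + y` moves the suc/ann layers of `x`, then those of `y`, outwards
and ends in `⟨XY⟩·0`, where `X·0` and `Y·0` are the innermost zeros of `x` and `y`. So `x + y`
and `y + x` reduce to the same layers stacked in opposite orders over `⟨XY⟩·0 = ⟨YX⟩·0`, and the
exchange laws let any two layers pass each other.
-/

namespace CN

/-- `x.graft t` replaces the innermost zero of a constructor number `x` by `t`
(on a term that does not start with a constructor layer it returns `t`). -/
def graft : CN C → CN C → CN C
  | .suc A a, t => .suc A (a.graft t)
  | .ann A B a, t => .ann A B (a.graft t)
  | _, t => t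

def zeroCond : CN C → C
  | .zero A => A
  | .suc _ a => a.zeroCond
  | .ann _ _ a => a.zeroCond
  | _ => 1

end CN

namespace CNSmooth

theorem graft_suc (x : CN C) (B : C) (t : CN C) :
    CNSmooth (x.graft (.suc B t)) (.suc B (x.graft t)) := by
  induction x with
  | suc A _ ih => exact .trans (.suc_congr A ih) (.exch_suc_suc A B _)
  | ann A₀ A₁ _ ih => exact .trans (.ann_congr A₀ A₁ ih) (.exch_ann_suc A₀ A₁ B _)
  | _ => exact .refl _

theorem graft_ann (x : CN C) (B₀ B₁ : C) (t : CN C) :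
    CNSmooth (x.graft (.ann B₀ B₁ t)) (.ann B₀ B₁ (x.graft t)) := by
  induction x with
  | suc A _ ih => exact .trans (.suc_congr A ih) (.symm (.exch_ann_suc B₀ B₁ A _))
  | ann A₀ A₁ _ ih => exact .trans (.ann_congr A₀ A₁ ih) (.exch_ann_ann A₀ A₁ B₀ B₁ _)
  | _ => exact .refl _

theorem graft_comm (x y t : CN C) :
    CNSmooth (x.graft (y.graft t)) (y.graft (x.graft t)) := by
  induction y with
  | suc B _ ih => exact .trans (graft_suc x B _) (.suc_congr B ih)
  | ann B₀ B₁ _ ih => exact .trans (graft_ann x B₀ B₁ _) (.ann_congr B₀ B₁ ih)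
  | _ => exact .refl _

end CNSmooth

namespace CNEqRed

theorem zero_add_of_isCon (X : C) {y : CN C} (hy : IsCon y) :
    CNEqRed (.add (.zero X) y) (y.graft (.zero (brkt (X * y.zeroCond)))) := by
  induction hy with
  | zero Y => exact add_zero_zero X Y
  | suc B _ ih => exact (add_zero_suc _ _ _).trans (suc_congr _ ih)
  | ann B₀ B₁ _ ih => exact (add_zero_ann _ _ _ _).trans (ann_congr _ _ ih)

theorem add_of_isCon {x y : CN C} (hx : IsCon x) (hy : IsCon y) :
    CNEqRed (.add x y) (x.graft (y.graft (.zero (brkt (x.zeroCond * y.zeroCond))))) := by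
  induction hx with
  | zero X => exact zero_add_of_isCon X hy
  | suc A _ ih => exact (add_suc _ _ _).trans (suc_congr _ ih)
  | ann A B _ ih => exact (add_ann _ _ _ _).trans (ann_congr _ _ ih)

end CNEqRed

/-- Commutativity of addition of constructed numbers. -/
theorem add_comm_CN (x y : CN C) (hx : IsCon x) (hy : IsCon y) :
    ∃ c : CN C, CNEqRed (.add x y) c ∧ CNEqRed (.add y x) c := by
  refine ⟨_, CNEqRed.add_of_isCon hx hy, (CNEqRed.add_of_isCon hy hx).trans (.of_smooth ?_)⟩
  rw [mul_comm y.zeroCond]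
  exact CNSmooth.graft_comm y x _
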